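/- Suppose Alice prepares a qubit in a basis state of one of three pairwise mutually unbiased bases of ℂ², choosing each of the two basis states of the chosen basis with equal prior probability 1/2, and Bob measures with an arbitrary POVM. Then the mutual information satisfies I_1 + I_2 + I_3 ≤ 1. -/

import Mathlib

open scoped BigOperators ComplexOrder
open Matrix

noncomputable section

/-- Shannon entropy (in bits) of a finitely-indexed probability vector. -/
def shannonEntropy {ι : Type*} [Fintype ι] (q : ι → ℝ) : ℝ :=
  -∑ i, q i * Real.logb 2 (q i)

/-- Born probability ⟨v|M|v⟩ of POVM element `M` on the (unit vector) state `v`. -/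
def outProb {d : ℕ} (M : Matrix (Fin d) (Fin d) ℂ) (v : Fin d → ℂ) : ℝ :=
  (star v ⬝ᵥ M.mulVec v).re

/-- A finite family of matrices is a POVM if each member is positive semidefinite
and they sum to the identity. -/
def IsPOVM {d : ℕ} {S : Type*} [Fintype S] (E : S → Matrix (Fin d) (Fin d) ℂ) : Prop :=
  (∀ s, (E s).PosSemidef) ∧ ∑ s, E s = 1

/-- `B` lists the vectors of an orthonormal basis of ℂ^d. -/
def IsONB {d : ℕ} (B : Fin d → Fin d → ℂ) : Prop :=
  ∀ i j, star (B i) ⬝ᵥ B j = if i = j then 1 else 0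

/-- Two bases of ℂ^d are mutually unbiased: all squared overlaps equal 1/d. -/
def AreMUB {d : ℕ} (B C : Fin d → Fin d → ℂ) : Prop :=
  ∀ i j, ‖star (B i) ⬝ᵥ C j‖ ^ 2 = 1 / d

/-- Mutual information (in bits) between Alice's input `i` (prior `p i`, state `B i`)
and Bob's POVM outcome `s`:  `I = H({p i}) - ∑ s p(s) H({p_{i|s}})`. -/
def mutInfo {d : ℕ} {S : Type*} [Fintype S] (B : Fin d → Fin d → ℂ) (p : Fin d → ℝ)
    (E : S → Matrix (Fin d) (Fin d) ℂ) : ℝ :=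
  shannonEntropy p -
    ∑ s, (∑ i, p i * outProb (E s) (B i)) *
      shannonEntropy (fun i =>
        p i * outProb (E s) (B i) / ∑ j, p j * outProb (E s) (B j))

/-! For uniform priors, `I_m = 1 - ½ ∑_s t_s h(q_s^m)`, where `t_s = tr E_s` and `q_s^m` is
the posterior on basis `m` given outcome `s`. The binary entropy in bits satisfies
`h(q) ≥ 4 q₀ q₁ = 1 - (q₀ - q₁)²`. The identity and the three observables
`|0_m⟩⟨0_m| - |1_m⟩⟨1_m|` are orthogonal for the Hilbert–Schmidt product, so Bessel's
inequality and `tr (E²) ≤ (tr E)²` give `∑_m (⟨0_m|E|0_m⟩ - ⟨1_m|E|1_m⟩)² ≤ (tr E)²` for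
every `E ≥ 0`. Hence `∑_m t_s h(q_s^m) ≥ 2 t_s` for each outcome, and `∑_s t_s = 2` yields
`∑_m I_m ≤ 3 - 2`. -/

open Real Set

namespace Real

def binEntropyGap (p : ℝ) : ℝ := binEntropy p - 4 * log 2 * (p * (1 - p))

lemma binEntropyGap_one_sub (p : ℝ) : binEntropyGap (1 - p) = binEntropyGap p := by
  simp only [binEntropyGap, binEntropy_one_sub]
  ring

lemma hasDerivAt_binEntropyGap {p : ℝ} (hp₀ : p ≠ 0) (hp₁ : p ≠ 1) :
    HasDerivAt binEntropyGap (log (1 - p) - log p - 4 * log 2 * (1 - 2 * p)) p := by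
  have hpoly := ((hasDerivAt_id p).mul ((hasDerivAt_id p).const_sub 1)).const_mul (4 * log 2)
  exact ((hasDerivAt_binEntropy hp₀ hp₁).sub hpoly).congr_deriv (by simp only [id]; ring)

lemma hasDerivAt_deriv_binEntropyGap {p : ℝ} (hp₀ : p ≠ 0) (hp₁ : p ≠ 1) :
    HasDerivAt (fun p => log (1 - p) - log p - 4 * log 2 * (1 - 2 * p))
      (8 * log 2 - 1 / (p * (1 - p))) p := by
  have h1p : 1 - p ≠ 0 := sub_ne_zero.2 (Ne.symm hp₁)
  have := ((((hasDerivAt_id p).const_sub 1).log h1p).sub (hasDerivAt_log hp₀)).sub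
    (((hasDerivAt_id p).const_mul 2).const_sub 1 |>.const_mul (4 * log 2))
  exact this.congr_deriv (by simp only [id]; field_simp; ring)

lemma convexOn_binEntropyGap {δ : ℝ} (hδ : δ ^ 2 = 1 / 4 - 1 / (8 * log 2)) :
    ConvexOn ℝ (Icc (1 / 2 - δ) (1 / 2 + δ)) binEntropyGap := by
  have hκ : 0 < 1 / (8 * log 2) := by have := log_pos one_lt_two; positivity
  have hint : ∀ p ∈ interior (Icc (1 / 2 - δ) (1 / 2 + δ)),
      p ≠ 0 ∧ p ≠ 1 ∧ 1 / (8 * log 2) < p * (1 - p) := by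
    intro p hp
    rw [interior_Icc] at hp
    have hpq : 1 / (8 * log 2) < p * (1 - p) := by nlinarith [hp.1, hp.2]
    exact ⟨by rintro rfl; linarith, by rintro rfl; linarith, hpq⟩
  refine convexOn_of_hasDerivWithinAt2_nonneg (convex_Icc _ _)
    (by unfold binEntropyGap; fun_prop)
    (f' := fun p => log (1 - p) - log p - 4 * log 2 * (1 - 2 * p))
    (f'' := fun p => 8 * log 2 - 1 / (p * (1 - p)))
    (fun p hp => (hasDerivAt_binEntropyGap (hint p hp).1 (hint p hp).2.1).hasDerivWithinAt)
    (fun p hp =>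
      (hasDerivAt_deriv_binEntropyGap (hint p hp).1 (hint p hp).2.1).hasDerivWithinAt)
    (fun p hp => ?_)
  have hpq := (hint p hp).2.2
  rw [sub_nonneg, div_le_iff₀ (by linarith)]
  rw [div_lt_iff₀ (by positivity)] at hpq
  linarith

lemma concaveOn_binEntropyGap {δ : ℝ} (hδ₀ : 0 ≤ δ)
    (hδ : δ ^ 2 = 1 / 4 - 1 / (8 * log 2)) :
    ConcaveOn ℝ (Icc 0 (1 / 2 - δ)) binEntropyGap := by
  have hint : ∀ p ∈ interior (Icc 0 (1 / 2 - δ)),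
      p ≠ 0 ∧ p ≠ 1 ∧ 0 < p * (1 - p) ∧ p * (1 - p) < 1 / (8 * log 2) := by
    intro p hp
    rw [interior_Icc] at hp
    obtain ⟨hp₀, hp₁⟩ := hp
    exact ⟨hp₀.ne', by linarith, by nlinarith, by nlinarith⟩
  refine concaveOn_of_hasDerivWithinAt2_nonpos (convex_Icc _ _)
    (by unfold binEntropyGap; fun_prop)
    (f' := fun p => log (1 - p) - log p - 4 * log 2 * (1 - 2 * p))
    (f'' := fun p => 8 * log 2 - 1 / (p * (1 - p)))
    (fun p hp => (hasDerivAt_binEntropyGap (hint p hp).1 (hint p hp).2.1).hasDerivWithinAt)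
    (fun p hp =>
      (hasDerivAt_deriv_binEntropyGap (hint p hp).1 (hint p hp).2.1).hasDerivWithinAt)
    (fun p hp => ?_)
  obtain ⟨-, -, hpos, hpq⟩ := hint p hp
  rw [sub_nonpos, le_div_iff₀ hpos]
  rw [lt_div_iff₀ (by have := log_pos one_lt_two; positivity)] at hpq
  linarith

lemma binEntropyGap_nonneg {p : ℝ} (hp₀ : 0 ≤ p) (hp₁ : p ≤ 1) :
    0 ≤ binEntropyGap p := by
  wlog hp : p ≤ 1 / 2 generalizing p
  · rw [← binEntropyGap_one_sub]
    exact this (by linarith) (by linarith) (by linarith)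
  have hlog : 1 / (8 * log 2) ≤ 1 / 4 := by
    rw [div_le_div_iff₀ (by positivity) (by norm_num)]
    linarith [log_two_gt_d9]
  -- `1/2 ± δ` are the inflection points of the gap
  set δ := √(1 / 4 - 1 / (8 * log 2))
  have hδ : δ ^ 2 = 1 / 4 - 1 / (8 * log 2) := sq_sqrt (by linarith)
  have hδ₀ : 0 ≤ δ := sqrt_nonneg _
  -- on the convex middle part, symmetry about `1/2` gives `gap q ≥ gap (1/2) = 0`
  have hmid : ∀ q ∈ Icc (1 / 2 - δ) (1 / 2 + δ), 0 ≤ binEntropyGap q := by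
    intro q hq
    have hq' : 1 - q ∈ Icc (1 / 2 - δ) (1 / 2 + δ) :=
      ⟨by linarith [hq.2], by linarith [hq.1]⟩
    have := (convexOn_binEntropyGap hδ).2 hq hq' (by norm_num : (0 : ℝ) ≤ 1 / 2)
      (by norm_num : (0 : ℝ) ≤ 1 / 2) (by norm_num)
    simp only [binEntropyGap_one_sub, smul_eq_mul] at this
    rw [show 1 / 2 * q + 1 / 2 * (1 - q) = 2⁻¹ by ring] at this
    simp only [binEntropyGap, binEntropy_two_inv] at this ⊢
    linarith
  rcases le_total p (1 / 2 - δ) with hpδ | hpδ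
  · have hend := (concaveOn_binEntropyGap hδ₀ hδ).min_le_of_mem_Icc
      (left_mem_Icc.2 (by nlinarith)) (right_mem_Icc.2 (by nlinarith)) ⟨hp₀, hpδ⟩
    have h0 : binEntropyGap 0 = 0 := by simp [binEntropyGap]
    rwa [h0, min_eq_left (hmid (1 / 2 - δ) ⟨le_rfl, by linarith⟩)] at hend
  · exact hmid p ⟨hpδ, by linarith⟩

lemma four_mul_log_two_mul_le_binEntropy {p : ℝ} (hp₀ : 0 ≤ p) (hp₁ : p ≤ 1) :
    4 * log 2 * (p * (1 - p)) ≤ binEntropy p := by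
  have := binEntropyGap_nonneg hp₀ hp₁
  rw [binEntropyGap] at this
  linarith

end Real

lemma shannonEntropy_fin_two {q : Fin 2 → ℝ} (hq : q 0 + q 1 = 1) :
    shannonEntropy q = binEntropy (q 0) / log 2 := by
  rw [shannonEntropy, Fin.sum_univ_two, binEntropy_eq_negMulLog_add_negMulLog_one_sub,
    ← eq_sub_of_add_eq' hq]
  simp only [negMulLog, logb]
  ring

lemma shannonEntropy_uniform (d : ℕ) :
    shannonEntropy (fun _ : Fin d => (1 : ℝ) / d) = logb 2 d := by
  rcases eq_or_ne d 0 with rfl | hd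
  · simp [shannonEntropy]
  · simp only [shannonEntropy, one_div, logb_inv, mul_neg, Finset.sum_neg_distrib,
      Finset.sum_const, Finset.card_univ, Fintype.card_fin, nsmul_eq_mul, neg_neg]
    field_simp

/-- With `w i = p_i ⟨i|M_s|i⟩` this is the term `p(s) H({p_{i|s}})` of `mutInfo`. -/
def weightedEntropy {ι : Type*} [Fintype ι] (w : ι → ℝ) : ℝ :=
  (∑ i, w i) * shannonEntropy (fun i => w i / ∑ j, w j)

lemma weightedEntropy_const_mul {ι : Type*} [Fintype ι] (c : ℝ) (w : ι → ℝ) :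
    weightedEntropy (fun i => c * w i) = c * weightedEntropy w := by
  rcases eq_or_ne c 0 with rfl | hc
  · simp [weightedEntropy]
  · simp only [weightedEntropy, ← Finset.mul_sum, mul_div_mul_left _ _ hc, mul_assoc]

lemma four_mul_mul_div_le_weightedEntropy {w : Fin 2 → ℝ} (hw : ∀ i, 0 ≤ w i) :
    4 * (w 0 * w 1) / (w 0 + w 1) ≤ weightedEntropy w := by
  have ht : ∑ i, w i = w 0 + w 1 := Fin.sum_univ_two w
  rcases (add_nonneg (hw 0) (hw 1)).eq_or_lt with h | h
  · rw [← h, div_zero, weightedEntropy, ht, ← h, zero_mul]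
  have hq : w 0 / (w 0 + w 1) + w 1 / (w 0 + w 1) = 1 := by field_simp
  have hbin := four_mul_log_two_mul_le_binEntropy (p := w 0 / (w 0 + w 1))
    (by have := hw 0; positivity) (by rw [div_le_one h]; linarith [hw 1])
  rw [weightedEntropy, ht, shannonEntropy_fin_two (q := fun i => w i / (w 0 + w 1)) hq,
    mul_div_assoc', le_div_iff₀ (log_pos one_lt_two)]
  rw [← eq_sub_of_add_eq' hq] at hbin
  have := mul_le_mul_of_nonneg_left hbin h.le
  field_simp at this ⊢
  linarith

lemma mutInfo_const {d : ℕ} {S : Type*} [Fintype S] (B : Fin d → Fin d → ℂ) (c : ℝ)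
    (E : S → Matrix (Fin d) (Fin d) ℂ) :
    mutInfo B (fun _ => c) E =
      shannonEntropy (fun _ : Fin d => c)
        - c * ∑ s, weightedEntropy (fun i => outProb (E s) (B i)) := by
  simp only [Finset.mul_sum, ← weightedEntropy_const_mul]
  rfl

namespace Matrix

lemma trace_mul_vecMulVec_star {n : Type*} [Fintype n] (M : Matrix n n ℂ) (v : n → ℂ) :
    trace (M * vecMulVec v (star v)) = star v ⬝ᵥ M *ᵥ v := by
  rw [trace_mul_comm, vecMulVec_mul, trace_vecMulVec, dotProduct_comm, dotProduct_mulVec]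

lemma trace_vecMulVec_star_mul_vecMulVec_star {n : Type*} [Fintype n] (v w : n → ℂ) :
    trace (vecMulVec v (star v) * vecMulVec w (star w)) = (‖star v ⬝ᵥ w‖ ^ 2 : ℝ) := by
  rw [vecMulVec_mul_vecMulVec, trace_vecMulVec, dotProduct_smul, smul_eq_mul, dotProduct_comm v,
    star_dotProduct w, Complex.star_def, Complex.mul_conj, Complex.normSq_eq_norm_sq]

lemma isHermitian_vecMulVec_star {n : Type*} (v : n → ℂ) :
    (vecMulVec v (star v)).IsHermitian := by
  rw [IsHermitian, conjTranspose_vecMulVec, star_star]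

lemma PosSemidef.re_trace_mul_self_le {M : Matrix (Fin 2) (Fin 2) ℂ} (hM : M.PosSemidef) :
    (trace (M * M)).re ≤ (trace M).re ^ 2 := by
  have htr : trace (M * M) = trace M ^ 2 - 2 * M.det := by
    simp only [trace_fin_two, det_fin_two, mul_apply, Fin.sum_univ_two]
    ring
  have hdet := Complex.nonneg_iff.mp hM.det_nonneg
  have htr0 := Complex.nonneg_iff.mp hM.trace_nonneg
  rw [htr]
  simp only [Complex.sub_re, sq, Complex.mul_re, ← htr0.2, ← hdet.2, Complex.re_ofNat,
    Complex.im_ofNat]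
  linarith [hdet.1]

/-- Bessel's inequality for the Hilbert–Schmidt product `⟨A, B⟩ = tr (A B)`. -/
lemma sum_sq_re_trace_mul_le {n ι : Type*} [Fintype n] [Fintype ι] [DecidableEq ι]
    {M : Matrix n n ℂ} (hM : M.IsHermitian) {F : ι → Matrix n n ℂ}
    (hF : ∀ i, (F i).IsHermitian) {κ : ℝ} (hκ : 0 < κ)
    (horth : ∀ i j, trace (F i * F j) = if i = j then (κ : ℂ) else 0) :
    ∑ i, (trace (M * F i)).re ^ 2 ≤ κ * (trace (M * M)).re := by
  set c : ι → ℝ := fun i => (trace (M * F i)).re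
  set G : Matrix n n ℂ := κ • M - ∑ i, c i • F i
  have hG : G.IsHermitian := (hM.smul (.all κ)).sub
    (isSelfAdjoint_sum _ fun i _ => ((hF i).smul (.all (c i))).isSelfAdjoint).isHermitian
  have hGG : 0 ≤ (trace (G * G)).re := by
    have := (posSemidef_conjTranspose_mul_self G).trace_nonneg
    rw [hG.eq] at this
    exact (Complex.nonneg_iff.mp this).1
  have hexp : (trace (G * G)).re = κ ^ 2 * (trace (M * M)).re - ∑ i, κ * c i ^ 2 := by
    have hcomm : ∀ i, trace (F i * M) = trace (M * F i) := fun i => trace_mul_comm _ _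
    simp only [G, c, hcomm, sub_mul, mul_sub, Finset.sum_mul, Finset.mul_sum, smul_mul_assoc,
      mul_smul_comm, trace_sub, trace_sum, trace_smul, horth, Complex.sub_re, Complex.re_sum,
      Complex.smul_re, apply_ite Complex.re, Complex.ofReal_re, Complex.zero_re, smul_eq_mul,
      mul_ite, mul_zero, Finset.sum_ite_eq', Finset.mem_univ, if_true]
    ring_nf
    rw [Finset.sum_const_zero, sub_zero]
  rw [hexp, ← Finset.mul_sum, sq, mul_assoc, ← mul_sub] at hGG
  linarith [(mul_nonneg_iff_of_pos_left hκ).mp hGG]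

end Matrix

lemma IsONB.sum_vecMulVec_star {d : ℕ} {B : Fin d → Fin d → ℂ} (hB : IsONB B) :
    ∑ i, vecMulVec (B i) (star (B i)) = 1 := by
  set V : Matrix (Fin d) (Fin d) ℂ := of fun i j => B j i
  have hV : Vᴴ * V = 1 := by
    ext i j
    simpa [mul_apply, one_apply, dotProduct, V] using hB i j
  have hV' : V * Vᴴ = 1 := mul_eq_one_comm.mp hV
  ext i j
  simpa [Matrix.sum_apply, mul_apply, vecMulVec_apply, V] using congr_fun₂ hV' i j

lemma IsONB.sum_outProb {d : ℕ} {B : Fin d → Fin d → ℂ} (hB : IsONB B)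
    (M : Matrix (Fin d) (Fin d) ℂ) : ∑ i, outProb M (B i) = (trace M).re := by
  simp_rw [outProb, ← trace_mul_vecMulVec_star, ← Complex.re_sum, ← trace_sum,
    ← Matrix.mul_sum, hB.sum_vecMulVec_star, Matrix.mul_one]

lemma AreMUB.symm {d : ℕ} {B C : Fin d → Fin d → ℂ} (h : AreMUB B C) : AreMUB C B := by
  intro i j
  rw [star_dotProduct, norm_star]
  exact h j i

lemma outProb_nonneg {d : ℕ} {M : Matrix (Fin d) (Fin d) ℂ} (hM : M.PosSemidef)
    (v : Fin d → ℂ) : 0 ≤ outProb M v :=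
  (Complex.nonneg_iff.mp (hM.dotProduct_mulVec_nonneg v)).1

def basisObservable (B : Fin 2 → Fin 2 → ℂ) : Matrix (Fin 2) (Fin 2) ℂ :=
  vecMulVec (B 0) (star (B 0)) - vecMulVec (B 1) (star (B 1))

lemma isHermitian_basisObservable (B : Fin 2 → Fin 2 → ℂ) : (basisObservable B).IsHermitian :=
  (isHermitian_vecMulVec_star _).sub (isHermitian_vecMulVec_star _)

lemma re_trace_mul_basisObservable (M : Matrix (Fin 2) (Fin 2) ℂ) (B : Fin 2 → Fin 2 → ℂ) :
    (trace (M * basisObservable B)).re = outProb M (B 0) - outProb M (B 1) := by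
  simp [basisObservable, mul_sub, trace_mul_vecMulVec_star, outProb]

lemma IsONB.trace_basisObservable {B : Fin 2 → Fin 2 → ℂ} (hB : IsONB B) :
    trace (basisObservable B) = 0 := by
  simp [basisObservable, dotProduct_comm (B _), hB 0 0, hB 1 1]

lemma IsONB.trace_basisObservable_mul_self {B : Fin 2 → Fin 2 → ℂ} (hB : IsONB B) :
    trace (basisObservable B * basisObservable B) = 2 := by
  simp only [basisObservable, sub_mul, mul_sub, trace_sub, trace_vecMulVec_star_mul_vecMulVec_star,
    hB 0 0, hB 0 1, hB 1 0, hB 1 1]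
  norm_num

lemma AreMUB.trace_basisObservable_mul {B C : Fin 2 → Fin 2 → ℂ} (h : AreMUB B C) :
    trace (basisObservable B * basisObservable C) = 0 := by
  simp only [basisObservable, sub_mul, mul_sub, trace_sub, trace_vecMulVec_star_mul_vecMulVec_star,
    h 0 0, h 0 1, h 1 0, h 1 1, sub_self]

lemma sum_sq_outProb_sub_le {M : Matrix (Fin 2) (Fin 2) ℂ} (hM : M.PosSemidef)
    {B₁ B₂ B₃ : Fin 2 → Fin 2 → ℂ} (hB₁ : IsONB B₁) (hB₂ : IsONB B₂) (hB₃ : IsONB B₃)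
    (h12 : AreMUB B₁ B₂) (h13 : AreMUB B₁ B₃) (h23 : AreMUB B₂ B₃) :
    (outProb M (B₁ 0) - outProb M (B₁ 1)) ^ 2 + (outProb M (B₂ 0) - outProb M (B₂ 1)) ^ 2
      + (outProb M (B₃ 0) - outProb M (B₃ 1)) ^ 2 ≤ (trace M).re ^ 2 := by
  set F : Fin 4 → Matrix (Fin 2) (Fin 2) ℂ :=
    ![1, basisObservable B₁, basisObservable B₂, basisObservable B₃]
  have hF : ∀ i, (F i).IsHermitian := by
    intro i
    fin_cases i <;> simp [F, isHermitian_one, isHermitian_basisObservable]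
  have horth : ∀ i j, trace (F i * F j) = if i = j then ((2 : ℝ) : ℂ) else 0 := by
    intro i j
    fin_cases i <;> fin_cases j <;>
      simp [F, hB₁.trace_basisObservable, hB₂.trace_basisObservable, hB₃.trace_basisObservable,
        hB₁.trace_basisObservable_mul_self, hB₂.trace_basisObservable_mul_self,
        hB₃.trace_basisObservable_mul_self, h12.trace_basisObservable_mul,
        h13.trace_basisObservable_mul, h23.trace_basisObservable_mul,
        h12.symm.trace_basisObservable_mul, h13.symm.trace_basisObservable_mul,
        h23.symm.trace_basisObservable_mul]
  have hbessel := sum_sq_re_trace_mul_le hM.isHermitian hF two_pos horth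
  simp only [Fin.sum_univ_four, F, Matrix.cons_val, mul_one, re_trace_mul_basisObservable]
    at hbessel
  nlinarith [hM.re_trace_mul_self_le]

lemma two_mul_re_trace_le_sum_weightedEntropy {M : Matrix (Fin 2) (Fin 2) ℂ}
    (hM : M.PosSemidef)
    {B₁ B₂ B₃ : Fin 2 → Fin 2 → ℂ} (hB₁ : IsONB B₁) (hB₂ : IsONB B₂) (hB₃ : IsONB B₃)
    (h12 : AreMUB B₁ B₂) (h13 : AreMUB B₁ B₃) (h23 : AreMUB B₂ B₃) :
    2 * (trace M).re ≤ weightedEntropy (fun i => outProb M (B₁ i))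
      + weightedEntropy (fun i => outProb M (B₂ i))
      + weightedEntropy (fun i => outProb M (B₃ i)) := by
  set t := (trace M).re
  have ht : 0 ≤ t := (Complex.nonneg_iff.mp hM.trace_nonneg).1
  have hbin : ∀ B, IsONB B → (t ^ 2 - (outProb M (B 0) - outProb M (B 1)) ^ 2) / t
      ≤ weightedEntropy (fun i => outProb M (B i)) := by
    intro B hB
    have hsum : outProb M (B 0) + outProb M (B 1) = t := by
      simpa [Fin.sum_univ_two] using hB.sum_outProb M
    convert four_mul_mul_div_le_weightedEntropy (fun i => outProb_nonneg hM (B i)) using 2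
    · rw [← hsum]; ring
    · exact hsum.symm
  have hbloch := sum_sq_outProb_sub_le hM hB₁ hB₂ hB₃ h12 h13 h23
  calc 2 * t = (3 * t ^ 2 - t ^ 2) / t := by
        rcases ht.eq_or_lt with h | h
        · simp [← h]
        · field_simp; ring
    _ ≤ (3 * t ^ 2 - ((outProb M (B₁ 0) - outProb M (B₁ 1)) ^ 2
          + (outProb M (B₂ 0) - outProb M (B₂ 1)) ^ 2
          + (outProb M (B₃ 0) - outProb M (B₃ 1)) ^ 2)) / t := by gcongr
    _ = (t ^ 2 - (outProb M (B₁ 0) - outProb M (B₁ 1)) ^ 2) / t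
          + (t ^ 2 - (outProb M (B₂ 0) - outProb M (B₂ 1)) ^ 2) / t
          + (t ^ 2 - (outProb M (B₃ 0) - outProb M (B₃ 1)) ^ 2) / t := by ring
    _ ≤ _ := by gcongr <;> exact hbin _ ‹_›

/-- Three qubit MUBs, uniform priors: `I₁ + I₂ + I₃ ≤ 1`. -/
theorem qubit_three_mub_uniform_bound
    {S : Type*} [Fintype S]
    (B₁ B₂ B₃ : Fin 2 → Fin 2 → ℂ)
    (hB₁ : IsONB B₁) (hB₂ : IsONB B₂) (hB₃ : IsONB B₃)
    (h12 : AreMUB B₁ B₂) (h13 : AreMUB B₁ B₃) (h23 : AreMUB B₂ B₃)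
    (E : S → Matrix (Fin 2) (Fin 2) ℂ) (hE : IsPOVM E) :
    mutInfo B₁ (fun _ => (1 : ℝ) / 2) E + mutInfo B₂ (fun _ => (1 : ℝ) / 2) E
      + mutInfo B₃ (fun _ => (1 : ℝ) / 2) E ≤ 1 := by
  obtain ⟨hpsd, hsum⟩ := hE
  have htr : ∑ s, (trace (E s)).re = 2 := by
    rw [← Complex.re_sum, ← trace_sum, hsum, trace_one]
    simp
  have hH : shannonEntropy (fun _ : Fin 2 => (1 : ℝ) / 2) = 1 := by
    simpa using shannonEntropy_uniform 2
  have hs := Finset.sum_le_sum fun s (_ : s ∈ Finset.univ) =>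
    two_mul_re_trace_le_sum_weightedEntropy (hpsd s) hB₁ hB₂ hB₃ h12 h13 h23
  rw [← Finset.mul_sum, htr, Finset.sum_add_distrib, Finset.sum_add_distrib] at hs
  rw [mutInfo_const, mutInfo_const, mutInfo_const, hH]
  linarith

end
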